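/- If (φ₀,φ₁,σ) is a non-deterrence subgame perfect equilibrium of the stage game Γ(μ), then Firm 0's mixed strategy satisfies φ₀([2α⁻_μ−1, α⁺_μ]) = 1 and Firm 1's mixed strategy satisfies φ₁([1−2α⁺_μ, 1−α⁻_μ]) = 1, where α⁻_μ = μα⁻/(μα⁻+(1−μ)(1−α⁻)) and α⁺_μ = μα⁺/(μα⁺+(1−μ)(1−α⁺)). -/

import Mathlib

open MeasureTheory Set Filter Topology
open scoped ENNReal NNReal

noncomputable section

/-- The consumer's possible actions: buy product 0, buy product 1, or exit. -/
inductive CAction : Type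
  | buy0 : CAction
  | buy1 : CAction
  | exit : CAction

instance : MeasurableSpace CAction := ⊤

/-- A signal structure `(F₀, F₁, S)`: two mutually absolutely continuous
probability measures on a measurable space `S`. -/
structure SignalStructure (S : Type) [MeasurableSpace S] : Type where
  F0 : Measure S
  F1 : Measure S
  prob0 : IsProbabilityMeasure F0
  prob1 : IsProbabilityMeasure F1
  ac01 : F0 ≪ F1
  ac10 : F1 ≪ F0

namespace SignalStructure

variable {S : Type} [MeasurableSpace S]

/-- The reference measure `(F₀ + F₁)/2`. -/
def ref (𝒮 : SignalStructure S) : Measure S := (2 : ℝ≥0∞)⁻¹ • (𝒮.F0 + 𝒮.F1)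

/-- Radon–Nikodym density of `F₀` with respect to `(F₀+F₁)/2`. -/
def f0 (𝒮 : SignalStructure S) : S → ℝ≥0∞ := 𝒮.F0.rnDeriv 𝒮.ref

/-- Radon–Nikodym density of `F₁` with respect to `(F₀+F₁)/2`. -/
def f1 (𝒮 : SignalStructure S) : S → ℝ≥0∞ := 𝒮.F1.rnDeriv 𝒮.ref

/-- The private belief `p(s) = f₀(s)/(f₀(s)+f₁(s))`. -/
def p (𝒮 : SignalStructure S) (s : S) : ℝ :=
  (𝒮.f0 s).toReal / ((𝒮.f0 s).toReal + (𝒮.f1 s).toReal)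

/-- `G₀(x) = F₀ {s | p(s) < x}`, the CDF of the private belief in state 0. -/
def G0 (𝒮 : SignalStructure S) (x : ℝ) : ℝ := (𝒮.F0 {s | 𝒮.p s < x}).toReal

/-- `G₁(x) = F₁ {s | p(s) < x}`, the CDF of the private belief in state 1. -/
def G1 (𝒮 : SignalStructure S) (x : ℝ) : ℝ := (𝒮.F1 {s | 𝒮.p s < x}).toReal

/-- `α⁻ = inf {x | G(x) > 0}`. -/
def alphaLo (𝒮 : SignalStructure S) : ℝ := sInf {x | 0 < 𝒮.G0 x}

/-- `α⁺ = sup {x | G(x) < 1}`. -/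
def alphaHi (𝒮 : SignalStructure S) : ℝ := sSup {x | 𝒮.G0 x < 1}

/-- Signals are bounded if `α⁻ > 0` and `α⁺ < 1`. -/
def Bounded (𝒮 : SignalStructure S) : Prop := 0 < 𝒮.alphaLo ∧ 𝒮.alphaHi < 1

/-- Signals are unbounded if `α⁻ = 0` and `α⁺ = 1`. -/
def Unbounded (𝒮 : SignalStructure S) : Prop := 𝒮.alphaLo = 0 ∧ 𝒮.alphaHi = 1

/-- Assumption 1: `G₀, G₁` are differentiable on `(α⁻, α⁺)` with continuous
nonnegative derivatives `g₀, g₁ : [α⁻, α⁺] → ℝ₊`. -/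
structure Assumption1 (𝒮 : SignalStructure S) (g0 g1 : ℝ → ℝ) : Prop where
  cont0 : ContinuousOn g0 (Icc 𝒮.alphaLo 𝒮.alphaHi)
  cont1 : ContinuousOn g1 (Icc 𝒮.alphaLo 𝒮.alphaHi)
  nonneg0 : ∀ x ∈ Icc 𝒮.alphaLo 𝒮.alphaHi, 0 ≤ g0 x
  nonneg1 : ∀ x ∈ Icc 𝒮.alphaLo 𝒮.alphaHi, 0 ≤ g1 x
  hasDeriv0 : ∀ x ∈ Ioo 𝒮.alphaLo 𝒮.alphaHi, HasDerivAt 𝒮.G0 (g0 x) x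
  hasDeriv1 : ∀ x ∈ Ioo 𝒮.alphaLo 𝒮.alphaHi, HasDerivAt 𝒮.G1 (g1 x) x

/-- The signal structure exhibits vanishing likelihood: `g₁(α⁻) = g₀(α⁺) = 0`. -/
def VanishingLikelihood (𝒮 : SignalStructure S) (g0 g1 : ℝ → ℝ) : Prop :=
  g1 𝒮.alphaLo = 0 ∧ g0 𝒮.alphaHi = 0

end SignalStructure

/-- Bayesian posterior on state 0 from a prior `μ` and a private belief `q`:
`p_μ = μ q / (μ q + (1-μ)(1-q))`. -/
def posterior (μ q : ℝ) : ℝ := μ * q / (μ * q + (1 - μ) * (1 - q))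

/-- The consumer's expected utility, given posterior `q` on state 0 and prices
`τ₀, τ₁`, from each action. -/
def cUtil (q τ0 τ1 : ℝ) : CAction → ℝ
  | CAction.buy0 => q - τ0
  | CAction.buy1 => (1 - q) - τ1
  | CAction.exit => 0

/-- A consumer pure strategy: maps the posted price pair and the signal to an action. -/
abbrev CStrategy (S : Type) : Type := ℝ → ℝ → S → CAction

/-- A mixed price strategy of a firm: a Borel probability measure on `[0,1]`. -/
def IsPriceStrategy (φ : Measure ℝ) : Prop :=
  IsProbabilityMeasure φ ∧ φ (Icc (0:ℝ) 1) = 1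

namespace SignalStructure

variable {S : Type} [MeasurableSpace S]

/-- The signal distribution under prior `μ`: the mixture `μ F₀ + (1-μ) F₁`. -/
def Fmix (𝒮 : SignalStructure S) (μ : ℝ) : Measure S :=
  ENNReal.ofReal μ • 𝒮.F0 + ENNReal.ofReal (1 - μ) • 𝒮.F1

/-- The probability (under prior `μ`) that the consumer takes action `a` when the
pure prices `τ₀, τ₁` are posted. -/
def actProb (𝒮 : SignalStructure S) (μ : ℝ) (σ : CStrategy S) (τ0 τ1 : ℝ) (a : CAction) : ℝ :=
  (𝒮.Fmix μ {s | σ τ0 τ1 s = a}).toReal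

/-- Firm 0's expected payoff in `Γ(μ)` under mixed strategies `φ₀, φ₁` and consumer
strategy `σ`. -/
def Pi0 (𝒮 : SignalStructure S) (μ : ℝ) (φ0 φ1 : Measure ℝ) (σ : CStrategy S) : ℝ :=
  ∫ τ, 𝒮.actProb μ σ τ.1 τ.2 CAction.buy0 * τ.1 ∂(φ0.prod φ1)

/-- Firm 1's expected payoff in `Γ(μ)`. -/
def Pi1 (𝒮 : SignalStructure S) (μ : ℝ) (φ0 φ1 : Measure ℝ) (σ : CStrategy S) : ℝ :=
  ∫ τ, 𝒮.actProb μ σ τ.1 τ.2 CAction.buy1 * τ.2 ∂(φ0.prod φ1)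

/-- The probability that the consumer takes action `a` under mixed price strategies. -/
def actProbMix (𝒮 : SignalStructure S) (μ : ℝ) (φ0 φ1 : Measure ℝ) (σ : CStrategy S)
    (a : CAction) : ℝ :=
  ∫ τ, 𝒮.actProb μ σ τ.1 τ.2 a ∂(φ0.prod φ1)

/-- A subgame perfect equilibrium of the stage game `Γ(μ)`: the consumer strategy is a
best reply to every price pair, and each firm's mixed price strategy maximizes its
expected payoff given the opponent's strategy and the consumer's strategy. -/
structure IsSPE (𝒮 : SignalStructure S) (μ : ℝ) (φ0 φ1 : Measure ℝ) (σ : CStrategy S) :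
    Prop where
  strat0 : IsPriceStrategy φ0
  strat1 : IsPriceStrategy φ1
  meas : ∀ τ0 τ1, Measurable (σ τ0 τ1)
  consumerBR : ∀ τ0 ∈ Icc (0:ℝ) 1, ∀ τ1 ∈ Icc (0:ℝ) 1,
    ∀ᵐ s ∂(𝒮.Fmix μ), ∀ a : CAction,
      cUtil (posterior μ (𝒮.p s)) τ0 τ1 a ≤ cUtil (posterior μ (𝒮.p s)) τ0 τ1 (σ τ0 τ1 s)
  firm0opt : ∀ ψ : Measure ℝ, IsPriceStrategy ψ → 𝒮.Pi0 μ ψ φ1 σ ≤ 𝒮.Pi0 μ φ0 φ1 σ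
  firm1opt : ∀ ψ : Measure ℝ, IsPriceStrategy ψ → 𝒮.Pi1 μ φ0 ψ σ ≤ 𝒮.Pi1 μ φ0 φ1 σ

/-- A deterrence equilibrium: an SPE in which some firm sells with probability zero. -/
def IsDeterrence (𝒮 : SignalStructure S) (μ : ℝ) (φ0 φ1 : Measure ℝ) (σ : CStrategy S) :
    Prop :=
  𝒮.IsSPE μ φ0 φ1 σ ∧
    (𝒮.actProbMix μ φ0 φ1 σ CAction.buy0 = 0 ∨ 𝒮.actProbMix μ φ0 φ1 σ CAction.buy1 = 0)

/-- The market is full at `(μ, σ, τ₀, τ₁)` if the consumer exits with probability zero. -/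
def MarketFull (𝒮 : SignalStructure S) (μ : ℝ) (σ : CStrategy S) (τ0 τ1 : ℝ) : Prop :=
  𝒮.Fmix μ {s | σ τ0 τ1 s = CAction.exit} = 0

open scoped Classical in
/-- The consumer's best-reply threshold `v_μ(τ₀,τ₁)` on the private belief. -/
def v (𝒮 : SignalStructure S) (μ : ℝ) (σ : CStrategy S) (τ0 τ1 : ℝ) : ℝ :=
  if 𝒮.MarketFull μ σ τ0 τ1 then
    (1 - μ) * (1 + τ0 - τ1) / (2 * μ - (2 * μ - 1) * (1 + τ0 - τ1))
  else (1 - μ) * τ0 / (μ - (2 * μ - 1) * τ0)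

end SignalStructure

/-!
Write `a = p_μ(α⁻)` and `b = p_μ(α⁺)`: almost surely the consumer's posterior lies in `[a, b]`.
A price above `b` therefore never sells, and a price below `2a - 1` sells to every consumer
whatever the rival charges. So an optimal mixed price puts no mass below `2a - 1`, since moving
that mass up is strictly better, and no mass above `b` as soon as some pure price earns a
positive profit. The latter can fail only if the rival always charges `1 - 2b`; in a
non-deterrence equilibrium this forces `1 - 2b = 0`, and the rival, then earning nothing, could
profitably undercut the prices above `b`. Firm 1's bounds are Firm 0's bounds in the mirrored
market, where the consumer's belief is `1 - p_μ`.
-/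

namespace CAction

def swap : CAction → CAction
  | buy0 => buy1
  | buy1 => buy0
  | exit => exit

@[simp] lemma swap_swap (a : CAction) : a.swap.swap = a := by cases a <;> rfl

@[simp] lemma swap_eq_buy0_iff {a : CAction} : a.swap = buy0 ↔ a = buy1 := by
  cases a <;> simp [swap]

end CAction

lemma cUtil_swap (q τ0 τ1 : ℝ) (a : CAction) : cUtil (1 - q) τ1 τ0 a.swap = cUtil q τ0 τ1 a := by
  cases a <;> simp only [cUtil, CAction.swap, sub_sub_cancel]

lemma measurable_of_eqOn_compl_countable {α β : Type*} [MeasurableSpace α]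
    [MeasurableSingletonClass α] [MeasurableSpace β] {f g : α → β} (hg : Measurable g)
    {C : Set α} (hC : C.Countable) (hfg : EqOn f g Cᶜ) : Measurable f := by
  have := hC.to_subtype
  refine measurable_of_restrict_of_restrict_compl hC.measurableSet (measurable_of_countable _) ?_
  rw [domRestrict_eq_domRestrict_iff.2 hfg]
  exact hg.comp measurable_subtype_coe

section RealMeasure

variable {μ : Measure ℝ}

lemma ae_le_iff_measure_Ioi_eq_zero {b : ℝ} : (∀ᵐ t ∂μ, t ≤ b) ↔ μ (Ioi b) = 0 := by
  rw [ae_iff]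
  simp only [not_le]
  rfl

lemma ae_ge_iff_measure_Iio_eq_zero {a : ℝ} : (∀ᵐ t ∂μ, a ≤ t) ↔ μ (Iio a) = 0 := by
  rw [ae_iff]
  simp only [not_le]
  rfl

lemma exists_lt_measure_Iic_ne_zero {c : ℝ} (h : μ (Iio c) ≠ 0) : ∃ L < c, μ (Iic L) ≠ 0 := by
  by_contra! H
  refine h ?_
  rw [← iUnion_Iic_eq_Iio_of_lt_of_tendsto (F := atTop)
    (fun n : ℕ => sub_lt_self c Nat.one_div_pos_of_nat)
    (by simpa using tendsto_const_nhds.sub (tendsto_one_div_add_atTop_nhds_zero_nat (𝕜 := ℝ)))]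
  exact measure_iUnion_null fun n => H _ (sub_lt_self c Nat.one_div_pos_of_nat)

lemma exists_gt_measure_Ici_ne_zero {c : ℝ} (h : μ (Ioi c) ≠ 0) : ∃ L > c, μ (Ici L) ≠ 0 := by
  by_contra! H
  refine h ?_
  rw [← iUnion_Ici_eq_Ioi_of_lt_of_tendsto (F := atTop)
    (fun n : ℕ => lt_add_of_pos_right c Nat.one_div_pos_of_nat)
    (by simpa using tendsto_const_nhds.add (tendsto_one_div_add_atTop_nhds_zero_nat (𝕜 := ℝ)))]
  exact measure_iUnion_null fun n => H _ (lt_add_of_pos_right c Nat.one_div_pos_of_nat)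

lemma ae_restrict_prod {φ ν : Measure ℝ} [SFinite φ] [SFinite ν] {p q : ℝ → Prop}
    (hp : ∀ᵐ t ∂φ, p t) (hq : ∀ᵐ t' ∂ν, q t') {B : Set ℝ} (hB : MeasurableSet B) :
    ∀ᵐ τ ∂((φ.restrict B).prod ν), (τ.1 ∈ B ∧ p τ.1) ∧ q τ.2 :=
  ((Measure.quasiMeasurePreserving_fst (μ := φ.restrict B) (ν := ν)).ae
      ((ae_restrict_mem hB).and (ae_restrict_of_ae (μ := φ) hp))).and
    ((Measure.quasiMeasurePreserving_snd (μ := φ.restrict B) (ν := ν)).ae hq)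

end RealMeasure

namespace IsPriceStrategy

variable {φ : Measure ℝ}

lemma ae_mem (h : IsPriceStrategy φ) : ∀ᵐ t ∂φ, t ∈ Icc (0:ℝ) 1 := by
  have := h.1
  rw [ae_mem_iff_measure_eq measurableSet_Icc.nullMeasurableSet, h.2, measure_univ]

lemma of_ae_mem [IsProbabilityMeasure φ] (h : ∀ᵐ t ∂φ, t ∈ Icc (0:ℝ) 1) :
    IsPriceStrategy φ := by
  rw [ae_mem_iff_measure_eq measurableSet_Icc.nullMeasurableSet, measure_univ] at h
  exact ⟨‹_›, h⟩

lemma dirac {x : ℝ} (hx : x ∈ Icc (0:ℝ) 1) : IsPriceStrategy (Measure.dirac x) :=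
  of_ae_mem (ae_dirac_iff measurableSet_Icc |>.2 hx)

/-- Moving the mass that `φ` puts on `B` to the pure price `x` cannot increase the payoff. -/
theorem measure_eq_zero_of_lt_integral_dirac_prod {f : ℝ × ℝ → ℝ} {ν : Measure ℝ}
    [IsProbabilityMeasure ν] (hφ : IsPriceStrategy φ)
    (hopt : ∀ ψ, IsPriceStrategy ψ → ∫ τ, f τ ∂(ψ.prod ν) ≤ ∫ τ, f τ ∂(φ.prod ν))
    {x c : ℝ} (hx : x ∈ Icc (0:ℝ) 1) (hc0 : 0 ≤ c)
    (hc : c < ∫ τ, f τ ∂((Measure.dirac x).prod ν))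
    {B : Set ℝ} (hB : MeasurableSet B) (hfB : ∀ᵐ τ ∂((φ.restrict B).prod ν), f τ ≤ c) :
    φ B = 0 := by
  have := hφ.1
  -- a non-integrable payoff would be `0`, so positive payoffs are integrable
  have hfx : Integrable f ((Measure.dirac x).prod ν) :=
    .of_integral_ne_zero (hc0.trans_lt hc).ne'
  have hf : Integrable f (φ.prod ν) :=
    .of_integral_ne_zero (hc0.trans_lt (hc.trans_le (hopt _ (.dirac hx)))).ne'
  have hfS (S : Set ℝ) : Integrable f ((φ.restrict S).prod ν) := by
    rw [Measure.restrict_prod_eq_prod_univ]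
    exact hf.restrict
  set ψ := φ.restrict Bᶜ + φ B • Measure.dirac x
  have hψ : IsPriceStrategy ψ := by
    have : IsProbabilityMeasure ψ :=
      ⟨by simp [ψ, add_comm (φ Bᶜ), measure_add_measure_compl hB]⟩
    refine .of_ae_mem (ae_add_measure_iff.2 ⟨ae_restrict_of_ae hφ.ae_mem, ?_⟩)
    exact Measure.ae_smul_measure ((ae_dirac_iff measurableSet_Icc).2 hx) _
  have hsplit : ∫ τ, f τ ∂(φ.prod ν)
      = ∫ τ, f τ ∂((φ.restrict B).prod ν) + ∫ τ, f τ ∂((φ.restrict Bᶜ).prod ν) := by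
    rw [← integral_add_measure (hfS B) (hfS Bᶜ), ← Measure.add_prod,
      Measure.restrict_add_restrict_compl hB]
  have hψP : ∫ τ, f τ ∂(ψ.prod ν) = ∫ τ, f τ ∂((φ.restrict Bᶜ).prod ν)
      + (φ B).toReal * ∫ τ, f τ ∂((Measure.dirac x).prod ν) := by
    rw [Measure.add_prod, Measure.prod_smul_left,
      integral_add_measure (hfS _) (hfx.smul_measure (measure_ne_top _ _)),
      integral_smul_measure, smul_eq_mul]
  have hBc : ∫ τ, f τ ∂((φ.restrict B).prod ν) ≤ (φ B).toReal * c := by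
    calc ∫ τ, f τ ∂((φ.restrict B).prod ν) ≤ ∫ _, c ∂((φ.restrict B).prod ν) :=
          integral_mono_ae (hfS B) (integrable_const c) hfB
      _ = (φ B).toReal * c := by
          rw [integral_const, smul_eq_mul, measureReal_def, ← univ_prod_univ,
            Measure.prod_prod, Measure.restrict_apply_univ, measure_univ (μ := ν), mul_one]
  have hgain : (φ B).toReal * (∫ τ, f τ ∂((Measure.dirac x).prod ν) - c) ≤ 0 := by
    nlinarith [hopt ψ hψ]
  have hzero : (φ B).toReal = 0 :=
    le_antisymm (nonpos_of_mul_nonpos_left hgain (by linarith)) ENNReal.toReal_nonneg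
  exact ((ENNReal.toReal_eq_zero_iff _).1 hzero).resolve_right (measure_ne_top _ _)

end IsPriceStrategy

namespace Duopoly

variable {Ω : Type*}

/-- The same market seen from the rival. -/
def swapChoice (ch : ℝ → ℝ → Ω → CAction) : ℝ → ℝ → Ω → CAction :=
  fun t t' ω => (ch t' t ω).swap

@[simp] lemma swapChoice_swapChoice (ch : ℝ → ℝ → Ω → CAction) :
    swapChoice (swapChoice ch) = ch := by
  funext t t' ω
  simp [swapChoice]

/-- A consumer with belief `r` prefers the firm's product to exiting iff `t < r`, and to the
rival's product iff `(1 + t - t') / 2 < r`. -/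
def ownThreshold (t t' : ℝ) : ℝ := max t ((1 + t - t') / 2)

lemma ownThreshold_antitone (t : ℝ) : Antitone (ownThreshold t) :=
  fun _ _ h => max_le_max le_rfl (by linarith)

variable [MeasurableSpace Ω] (m : Measure Ω)

/-- Market share of action `a` when the firm charges `t` and its rival `t'`; in this
one-firm view `buy0` is the firm's own product and `buy1` the rival's. -/
def share (ch : ℝ → ℝ → Ω → CAction) (a : CAction) (t t' : ℝ) : ℝ :=
  m.real {ω | ch t t' ω = a}

def profit (ch : ℝ → ℝ → Ω → CAction) (φ ν : Measure ℝ) : ℝ :=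
  ∫ τ, share m ch .buy0 τ.1 τ.2 * τ.1 ∂(φ.prod ν)

def sales (ch : ℝ → ℝ → Ω → CAction) (φ ν : Measure ℝ) : ℝ :=
  ∫ τ, share m ch .buy0 τ.1 τ.2 ∂(φ.prod ν)

/-- `r ω` is the consumer's belief that the firm's product is the right one. -/
def IsBestReply (r : Ω → ℝ) (ch : ℝ → ℝ → Ω → CAction) : Prop :=
  ∀ t ∈ Icc (0:ℝ) 1, ∀ t' ∈ Icc (0:ℝ) 1, ∀ᵐ ω ∂m, ∀ a : CAction,
    cUtil (r ω) t t' a ≤ cUtil (r ω) t t' (ch t t' ω)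

structure IsEquilibrium (r : Ω → ℝ) (ch : ℝ → ℝ → Ω → CAction) (φ ν : Measure ℝ) : Prop where
  own : IsPriceStrategy φ
  rival : IsPriceStrategy ν
  measurable_choice : ∀ t t', Measurable (ch t t')
  bestReply : IsBestReply m r ch
  own_opt : ∀ ψ, IsPriceStrategy ψ → profit m ch ψ ν ≤ profit m ch φ ν
  rival_opt : ∀ ψ, IsPriceStrategy ψ → profit m (swapChoice ch) ψ φ ≤ profit m (swapChoice ch) ν φ

variable {m} {r : Ω → ℝ} {ch : ℝ → ℝ → Ω → CAction} {t t' : ℝ} {φ ν : Measure ℝ}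

lemma share_nonneg (a : CAction) (t t' : ℝ) : 0 ≤ share m ch a t t' := measureReal_nonneg

lemma share_le_one [IsProbabilityMeasure m] (a : CAction) (t t' : ℝ) : share m ch a t t' ≤ 1 :=
  measureReal_le_one

lemma share_buy0_add_buy1_le [IsProbabilityMeasure m] (hch : Measurable (ch t t')) :
    share m ch .buy0 t t' + share m ch .buy1 t t' ≤ 1 := by
  have hdisj : Disjoint {ω | ch t t' ω = .buy0} {ω | ch t t' ω = .buy1} :=
    Set.disjoint_left.2 fun ω h0 h1 => by simp_all
  rw [share, share, ← measureReal_union hdisj (hch (measurableSet_singleton _))]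
  exact measureReal_le_one

lemma share_swapChoice (t t' : ℝ) :
    share m (swapChoice ch) .buy0 t' t = share m ch .buy1 t t' := by
  simp [share, swapChoice]

lemma profit_swapChoice [SFinite φ] [SFinite ν] :
    profit m (swapChoice ch) ν φ = ∫ τ, share m ch .buy1 τ.1 τ.2 * τ.2 ∂(φ.prod ν) := by
  rw [profit, ← integral_prod_swap]
  simp only [Prod.fst_swap, Prod.snd_swap, share_swapChoice]

lemma sales_swapChoice [SFinite φ] [SFinite ν] :
    sales m (swapChoice ch) ν φ = ∫ τ, share m ch .buy1 τ.1 τ.2 ∂(φ.prod ν) := by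
  rw [sales, ← integral_prod_swap]
  simp only [Prod.fst_swap, Prod.snd_swap, share_swapChoice]

lemma profit_dirac [SFinite ν] (x : ℝ) :
    profit m ch (Measure.dirac x) ν = ∫ t', share m ch .buy0 x t' * x ∂ν := by
  rw [profit, Measure.dirac_prod, (measurableEmbedding_prodMk_left x).integral_map]

lemma profit_dirac_eq [IsProbabilityMeasure ν] (hν : ∀ᵐ t' ∂ν, t' ∈ Icc (0:ℝ) 1) {x : ℝ}
    (h : ∀ t' ∈ Icc (0:ℝ) 1, share m ch .buy0 x t' = 1) :
    profit m ch (Measure.dirac x) ν = x := by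
  rw [profit_dirac, integral_congr_ae (g := fun _ => x) (hν.mono fun t' ht' => by simp [h t' ht']),
    integral_const, probReal_univ, one_smul]

lemma mul_measureReal_le_profit_dirac [IsProbabilityMeasure m] [IsFiniteMeasure ν] {x : ℝ}
    (hx : 0 ≤ x) (hmeas : AEStronglyMeasurable (fun t' => share m ch .buy0 x t') ν)
    {T : Set ℝ} (hT : MeasurableSet T) {c : ℝ} (hc : ∀ t' ∈ T, c ≤ share m ch .buy0 x t') :
    c * x * ν.real T ≤ profit m ch (Measure.dirac x) ν := by
  have hint : Integrable (fun t' => share m ch .buy0 x t' * x) ν :=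
    (integrable_const x).mono' (hmeas.mul_const x) <| .of_forall fun t' => by
      rw [Real.norm_eq_abs, abs_of_nonneg (mul_nonneg (share_nonneg _ _ _) hx)]
      exact mul_le_of_le_one_left hx (share_le_one _ _ _)
  rw [profit_dirac]
  calc c * x * ν.real T ≤ ∫ t' in T, share m ch .buy0 x t' * x ∂ν :=
        setIntegral_ge_of_const_le_real hT (measure_ne_top _ _)
          (fun t' ht' => mul_le_mul_of_nonneg_right (hc t' ht') hx) hint.integrableOn
    _ ≤ _ := setIntegral_le_integral hint
          (.of_forall fun t' => mul_nonneg (share_nonneg _ _ _) hx)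

namespace IsBestReply

lemma swap (h : IsBestReply m r ch) : IsBestReply m (fun ω => 1 - r ω) (swapChoice ch) := by
  intro t ht t' ht'
  filter_upwards [h t' ht' t ht] with ω hω a
  have := hω a.swap
  rwa [← cUtil_swap, ← cUtil_swap (r ω) t' t, CAction.swap_swap] at this

lemma ae_buy0_of_ownThreshold_lt (h : IsBestReply m r ch) (ht : t ∈ Icc (0:ℝ) 1)
    (ht' : t' ∈ Icc (0:ℝ) 1) : ∀ᵐ ω ∂m, ownThreshold t t' < r ω → ch t t' ω = .buy0 := by
  filter_upwards [h t ht t' ht'] with ω hω hlt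
  rw [ownThreshold, max_lt_iff] at hlt
  have h0 := hω .buy0
  cases hc : ch t t' ω <;> simp only [hc, cUtil] at h0 <;> first | rfl | (exfalso; linarith)

lemma ae_ownThreshold_le_of_buy0 (h : IsBestReply m r ch) (ht : t ∈ Icc (0:ℝ) 1)
    (ht' : t' ∈ Icc (0:ℝ) 1) : ∀ᵐ ω ∂m, ch t t' ω = .buy0 → ownThreshold t t' ≤ r ω := by
  filter_upwards [h t ht t' ht'] with ω hω hc
  have h1 := hω .buy1
  have he := hω .exit
  simp only [hc, cUtil] at h1 he
  exact max_le (by linarith) (by linarith)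

lemma measure_ownThreshold_lt_le (h : IsBestReply m r ch) (ht : t ∈ Icc (0:ℝ) 1)
    (ht' : t' ∈ Icc (0:ℝ) 1) : m {ω | ownThreshold t t' < r ω} ≤ m {ω | ch t t' ω = .buy0} :=
  measure_mono_ae (h.ae_buy0_of_ownThreshold_lt ht ht')

lemma measure_buy0_le (h : IsBestReply m r ch) (ht : t ∈ Icc (0:ℝ) 1)
    (ht' : t' ∈ Icc (0:ℝ) 1) : m {ω | ch t t' ω = .buy0} ≤ m {ω | ownThreshold t t' ≤ r ω} :=
  measure_mono_ae (h.ae_ownThreshold_le_of_buy0 ht ht')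

lemma measureReal_lt_le_share [IsFiniteMeasure m] (h : IsBestReply m r ch)
    (ht : t ∈ Icc (0:ℝ) 1) (ht' : t' ∈ Icc (0:ℝ) 1) {s : ℝ} (hs : ownThreshold t t' ≤ s) :
    m.real {ω | s < r ω} ≤ share m ch .buy0 t t' :=
  measureReal_mono (fun ω hω => lt_of_le_of_lt hs hω) |>.trans <|
    ENNReal.toReal_mono (measure_ne_top _ _) (h.measure_ownThreshold_lt_le ht ht')

lemma share_eq_zero_of_lt (h : IsBestReply m r ch) (ht : t ∈ Icc (0:ℝ) 1)
    (ht' : t' ∈ Icc (0:ℝ) 1) {b : ℝ} (hle : ∀ᵐ ω ∂m, r ω ≤ b) (hb : b < t) :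
    share m ch .buy0 t t' = 0 := by
  have : m {ω | ownThreshold t t' ≤ r ω} = 0 := by
    refine measure_eq_zero_iff_ae_notMem.2 (hle.mono fun ω hω hθ => ?_)
    exact absurd (hθ.trans hω) (not_le.2 (hb.trans_le (le_max_left _ _)))
  simp [share, Measure.real, nonpos_iff_eq_zero.1 (this ▸ h.measure_buy0_le ht ht')]

lemma share_eq_one_of_ae_lt [IsProbabilityMeasure m] (h : IsBestReply m r ch)
    (ht : t ∈ Icc (0:ℝ) 1) (ht' : t' ∈ Icc (0:ℝ) 1) (hlt : ∀ᵐ ω ∂m, ownThreshold t t' < r ω) :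
    share m ch .buy0 t t' = 1 := by
  have : ∀ᵐ ω ∂m, ch t t' ω = .buy0 := by
    filter_upwards [h.ae_buy0_of_ownThreshold_lt ht ht', hlt] with ω hω hθ using hω hθ
  rw [share, measureReal_def, measure_congr (eventuallyEq_univ.2 this), measure_univ,
    ENNReal.toReal_one]

lemma share_eq_of_atom (h : IsBestReply m r ch) (ht : t ∈ Icc (0:ℝ) 1)
    (ht' : t' ∈ Icc (0:ℝ) 1) (hatom : m {ω | r ω = ownThreshold t t'} = 0) :
    share m ch .buy0 t t' = m.real {ω | ownThreshold t t' < r ω} := by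
  have hle : m {ω | ownThreshold t t' ≤ r ω} ≤ m {ω | ownThreshold t t' < r ω} :=
    measure_mono_ae <| (measure_eq_zero_iff_ae_notMem.1 hatom).mono
      fun ω hω hθ => lt_of_le_of_ne hθ (Ne.symm hω)
  exact congrArg ENNReal.toReal
    (le_antisymm ((h.measure_buy0_le ht ht').trans hle) (h.measure_ownThreshold_lt_le ht ht'))

/-- Off the countably many atoms of the belief distribution the demand is monotone in the
rival's price, which makes it measurable. -/
lemma aestronglyMeasurable_share [IsFiniteMeasure m] (h : IsBestReply m r ch)
    (hr : Measurable r) {x : ℝ} (hx : x ∈ Icc (0:ℝ) 1) (hatom : m {ω | r ω = x} = 0)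
    (hν : ∀ᵐ t' ∂ν, t' ∈ Icc (0:ℝ) 1) :
    AEStronglyMeasurable (fun t' => share m ch .buy0 x t') ν := by
  set N : ℝ → ℝ := fun t' => m.real {ω | ownThreshold x t' < r ω}
  have hN : Monotone N := fun u v huv => measureReal_mono fun ω hω =>
    lt_of_le_of_lt (ownThreshold_antitone x huv) hω
  set C : Set ℝ := (fun t' => (1 + x - t') / 2) ⁻¹' {s | 0 < m {ω | r ω = s}}
  have hC : C.Countable := (Measure.countable_meas_level_set_pos hr).preimage
    fun u v huv => by linarith [show (1 + x - u) / 2 = (1 + x - v) / 2 from huv]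
  set g : ℝ → ℝ := fun t' => if t' ∈ Icc (0:ℝ) 1 then share m ch .buy0 x t' else N t'
  have hg : Measurable g := by
    refine measurable_of_eqOn_compl_countable hN.measurable hC fun t' ht'C => ?_
    by_cases ht' : t' ∈ Icc (0:ℝ) 1
    · simp only [g, if_pos ht']
      refine h.share_eq_of_atom hx ht' ?_
      rcases max_choice x ((1 + x - t') / 2) with he | he <;> rw [ownThreshold, he]
      · exact hatom
      · simpa [C] using ht'C
    · simp only [g, if_neg ht']
  exact hg.aestronglyMeasurable.congr <| by
    filter_upwards [hν] with t' ht' using if_pos ht'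

/-- Against rival prices above `1 - 2b + δ`, a price `x < δ` sells to every consumer whose
belief exceeds some level below `b`. -/
theorem exists_profit_dirac_pos [IsProbabilityMeasure m] (h : IsBestReply m r ch)
    (hr : Measurable r) (hν : IsPriceStrategy ν) {b : ℝ}
    (hpos : ∀ t < b, m {ω | t < r ω} ≠ 0) (hmass : ν (Ioi (1 - 2 * b)) ≠ 0) :
    ∃ x ∈ Icc (0:ℝ) 1, 0 < profit m ch (Measure.dirac x) ν := by
  have := hν.1
  obtain ⟨L, hL, hνL⟩ := exists_gt_measure_Ici_ne_zero hmass
  set T := Ici L ∩ Icc (0:ℝ) 1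
  have hνT : ν T ≠ 0 := by
    rwa [measure_inter_conull ((prob_compl_eq_zero_iff measurableSet_Icc).2 hν.2)]
  obtain ⟨t₀, ht₀L, ht₀⟩ := nonempty_of_measure_ne_zero hνT
  have hb : 0 < b := by linarith [ht₀.2, show L ≤ t₀ from ht₀L]
  obtain ⟨x, hxC, hx0, hx⟩ :=
    ((Measure.countable_meas_level_set_pos (μ := m) hr).dense_compl ℝ).exists_between
      (lt_min (lt_min hb (sub_pos.2 hL)) one_pos)
  simp only [lt_min_iff] at hx
  have hatom : m {ω | r ω = x} = 0 := nonpos_iff_eq_zero.1 (not_lt.1 hxC)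
  have hxI : x ∈ Icc (0:ℝ) 1 := ⟨hx0.le, hx.2.le⟩
  set s := max x (b + (x - (L - (1 - 2 * b))) / 2)
  have hs : s < b := max_lt hx.1.1 (by linarith [hx.1.2])
  have hshare : ∀ t' ∈ T, m.real {ω | s < r ω} ≤ share m ch .buy0 x t' := fun t' ht' =>
    h.measureReal_lt_le_share hxI ht'.2 (max_le_max le_rfl (by linarith [show L ≤ t' from ht'.1]))
  refine ⟨x, hxI, lt_of_lt_of_le ?_ (mul_measureReal_le_profit_dirac hx0.le
    (h.aestronglyMeasurable_share hr hxI hatom hν.ae_mem)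
    (measurableSet_Ici.inter measurableSet_Icc) hshare)⟩
  have hms : 0 < m.real {ω | s < r ω} := ENNReal.toReal_pos (hpos s hs) (measure_ne_top _ _)
  have hνT' : 0 < ν.real T := ENNReal.toReal_pos hνT (measure_ne_top _ _)
  exact mul_pos (mul_pos hms hx0) hνT'

end IsBestReply

namespace IsEquilibrium

theorem swap (E : IsEquilibrium m r ch φ ν) :
    IsEquilibrium m (fun ω => 1 - r ω) (swapChoice ch) ν φ where
  own := E.rival
  rival := E.own
  measurable_choice t t' := measurable_from_top.comp (E.measurable_choice t' t)
  bestReply := E.bestReply.swap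
  own_opt := E.rival_opt
  rival_opt := by simpa only [swapChoice_swapChoice] using E.own_opt

/-- Below `2a - 1` the firm serves every consumer, so raising the price is profitable. -/
theorem ae_two_mul_sub_one_le [IsProbabilityMeasure m] (E : IsEquilibrium m r ch φ ν) {a : ℝ}
    (ha : ∀ᵐ ω ∂m, a ≤ r ω) (ha1 : a ≤ 1) : ∀ᵐ t ∂φ, 2 * a - 1 ≤ t := by
  have := E.own.1
  have := E.rival.1
  have hcap : ∀ t ∈ Icc (0:ℝ) 1, t < 2 * a - 1 → ∀ t' ∈ Icc (0:ℝ) 1,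
      share m ch .buy0 t t' = 1 := fun t ht hta t' ht' =>
    E.bestReply.share_eq_one_of_ae_lt ht ht' <| ha.mono fun ω hω =>
      (max_lt (by linarith) (by linarith [ht'.1])).trans_le hω
  rw [ae_ge_iff_measure_Iio_eq_zero]
  by_contra hne
  obtain ⟨L, hL, hφL⟩ := exists_lt_measure_Iic_ne_zero hne
  obtain ⟨t₀, ht₀L, ht₀⟩ := nonempty_of_measure_ne_zero
    (show φ (Iic L ∩ Icc 0 1) ≠ 0 by
      rwa [measure_inter_conull ((prob_compl_eq_zero_iff measurableSet_Icc).2 E.own.2)])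
  have hL0 : 0 ≤ L := ht₀.1.trans ht₀L
  have hx : (L + (2 * a - 1)) / 2 ∈ Icc (0:ℝ) 1 := ⟨by linarith, by linarith⟩
  refine hφL (E.own.measure_eq_zero_of_lt_integral_dirac_prod E.own_opt hx hL0 ?_
    measurableSet_Iic ?_)
  · change L < profit m ch _ ν
    rw [profit_dirac_eq E.rival.ae_mem (hcap _ hx (by linarith))]
    linarith
  · filter_upwards [ae_restrict_prod E.own.ae_mem E.rival.ae_mem measurableSet_Iic]
      with τ ⟨⟨hτL, hτ⟩, hτ'⟩
    rw [hcap τ.1 hτ (lt_of_le_of_lt hτL hL) τ.2 hτ', one_mul]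
    exact hτL

/-- A rival pricing at most `c = 1 - 2b` earns at most `c` times its sales, which are below `1`
when the firm sells; but any price below `c` already wins the whole market. -/
theorem one_sub_two_mul_nonpos [IsProbabilityMeasure m] (E : IsEquilibrium m r ch φ ν) {b : ℝ}
    (hb0 : 0 ≤ b) (hle : ∀ᵐ ω ∂m, r ω ≤ b) (hown : sales m ch φ ν ≠ 0)
    (hrival : sales m (swapChoice ch) ν φ ≠ 0) (hν : ∀ᵐ t' ∂ν, t' ≤ 1 - 2 * b) :
    1 - 2 * b ≤ 0 := by
  have := E.own.1
  have := E.rival.1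
  by_contra! hc
  set c := 1 - 2 * b
  have hcap : ∀ y ∈ Ioo 0 c, ∀ t ∈ Icc (0:ℝ) 1, share m (swapChoice ch) .buy0 y t = 1 :=
    fun y hy t ht => E.bestReply.swap.share_eq_one_of_ae_lt ⟨hy.1.le, by linarith [hy.2]⟩ ht <|
      hle.mono fun ω hω => max_lt (by linarith [hy.2]) (by linarith [hy.2, ht.1])
  have hint_rival := Integrable.of_integral_ne_zero hrival
  have hsales : sales m ch φ ν + sales m (swapChoice ch) ν φ ≤ 1 := by
    rw [sales_swapChoice] at hrival ⊢
    rw [sales, ← integral_add (.of_integral_ne_zero hown) (.of_integral_ne_zero hrival)]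
    refine (integral_mono_of_nonneg (.of_forall fun τ => ?_) (integrable_const 1)
      (.of_forall fun τ : ℝ × ℝ => share_buy0_add_buy1_le (E.measurable_choice τ.1 τ.2))).trans_eq
      (by simp)
    exact add_nonneg (share_nonneg _ _ _) (share_nonneg _ _ _)
  have hown_pos : 0 < sales m ch φ ν :=
    (integral_nonneg fun τ => share_nonneg _ _ _).lt_of_ne' hown
  have hrival_nonneg : 0 ≤ sales m (swapChoice ch) ν φ :=
    integral_nonneg fun τ => share_nonneg _ _ _
  have hlt : c * sales m (swapChoice ch) ν φ < c := by nlinarith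
  set y := (c * sales m (swapChoice ch) ν φ + c) / 2 with hy_def
  have hy : y ∈ Ioo 0 c := ⟨by positivity, by linarith⟩
  have hdev : y ≤ profit m (swapChoice ch) ν φ := by
    have := E.rival_opt _ (.dirac ⟨hy.1.le, by linarith [hy.2]⟩)
    rwa [profit_dirac_eq E.own.ae_mem (hcap y hy)] at this
  have hprofit : profit m (swapChoice ch) ν φ ≤ c * sales m (swapChoice ch) ν φ := by
    rw [sales, ← integral_const_mul]
    refine integral_mono_ae (.of_integral_ne_zero (hy.1.trans_le hdev).ne')
      (hint_rival.const_mul c) ?_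
    filter_upwards [(Measure.quasiMeasurePreserving_fst (μ := ν) (ν := φ)).ae hν] with τ hτ
    rw [mul_comm c]
    exact mul_le_mul_of_nonneg_left hτ (share_nonneg _ _ _)
  linarith

/-- Otherwise `1 - 2b = 0` and the rival always charges `0`, while it could profitably
undercut the firm's prices above `b`. -/
theorem measure_Ioi_one_sub_two_mul_ne_zero [IsProbabilityMeasure m]
    (E : IsEquilibrium m r ch φ ν) (hr : Measurable r) {b : ℝ} (hb0 : 0 ≤ b)
    (hle : ∀ᵐ ω ∂m, r ω ≤ b) (hown : sales m ch φ ν ≠ 0)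
    (hrival : sales m (swapChoice ch) ν φ ≠ 0) (hB : φ (Ioi b) ≠ 0) :
    ν (Ioi (1 - 2 * b)) ≠ 0 := by
  have := E.own.1
  have := E.rival.1
  intro hν
  rw [← ae_le_iff_measure_Ioi_eq_zero] at hν
  have hc := E.one_sub_two_mul_nonpos hb0 hle hown hrival hν
  have hzero : profit m (swapChoice ch) ν φ = 0 := by
    refine integral_eq_zero_of_ae ?_
    filter_upwards [(Measure.quasiMeasurePreserving_fst (μ := ν) (ν := φ)).ae
      (hν.and E.rival.ae_mem)] with τ hτ
    simp [le_antisymm (hτ.1.trans hc) hτ.2.1]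
  have hb1 : b ≤ 1 := by
    by_contra! hb1
    refine hB (measure_mono_null (fun t ht => ?_)
      ((prob_compl_eq_zero_iff measurableSet_Icc).2 E.own.2))
    exact fun htI => absurd (hb1.trans (mem_Ioi.1 ht)) (not_lt.2 htI.2)
  have hpos : ∀ t < 1 - b, m {ω | t < 1 - r ω} ≠ 0 := fun t ht h0 => by
    obtain ⟨ω, hω, hωb⟩ := ((measure_eq_zero_iff_ae_notMem.1 h0).and hle).exists
    exact hω (show t < 1 - r ω by linarith)
  have hmass : φ (Ioi (1 - 2 * (1 - b))) ≠ 0 := fun h0 =>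
    hB (measure_mono_null (Ioi_subset_Ioi (by linarith)) h0)
  obtain ⟨y, hy, hprofit⟩ :=
    E.bestReply.swap.exists_profit_dirac_pos (hr.const_sub 1) E.own hpos hmass
  exact (E.rival_opt _ (.dirac hy)).not_gt (hzero ▸ hprofit)

/-- Prices above `b` sell nothing, and some pure price earns a positive profit. -/
theorem ae_le [IsProbabilityMeasure m] (E : IsEquilibrium m r ch φ ν) (hr : Measurable r)
    {b : ℝ} (hb0 : 0 ≤ b) (hle : ∀ᵐ ω ∂m, r ω ≤ b) (hpos : ∀ t < b, m {ω | t < r ω} ≠ 0)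
    (hown : sales m ch φ ν ≠ 0) (hrival : sales m (swapChoice ch) ν φ ≠ 0) :
    ∀ᵐ t ∂φ, t ≤ b := by
  have := E.own.1
  have := E.rival.1
  rw [ae_le_iff_measure_Ioi_eq_zero]
  by_contra hB
  obtain ⟨x, hx, hprofit⟩ := E.bestReply.exists_profit_dirac_pos hr E.rival hpos
    (E.measure_Ioi_one_sub_two_mul_ne_zero hr hb0 hle hown hrival hB)
  refine hB (E.own.measure_eq_zero_of_lt_integral_dirac_prod E.own_opt hx le_rfl hprofit
    measurableSet_Ioi ?_)
  filter_upwards [ae_restrict_prod E.own.ae_mem E.rival.ae_mem measurableSet_Ioi]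
    with τ ⟨⟨hτb, hτ⟩, hτ'⟩
  rw [E.bestReply.share_eq_zero_of_lt hτ hτ' hle hτb, zero_mul]

end IsEquilibrium

end Duopoly
lemma posterior_denom_pos {μ x : ℝ} (hμ : μ ∈ Ioo (0:ℝ) 1) (hx : x ∈ Icc (0:ℝ) 1) :
    0 < μ * x + (1 - μ) * (1 - x) := by
  obtain ⟨hμ0, hμ1⟩ := hμ
  obtain ⟨hx0, hx1⟩ := hx
  rcases hx0.eq_or_lt with rfl | hx0
  · nlinarith
  · nlinarith [mul_nonneg (sub_nonneg.2 hμ1.le) (sub_nonneg.2 hx1)]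

lemma posterior_mem {μ x : ℝ} (hμ : μ ∈ Ioo (0:ℝ) 1) (hx : x ∈ Icc (0:ℝ) 1) :
    posterior μ x ∈ Icc (0:ℝ) 1 := by
  have hd := posterior_denom_pos hμ hx
  have := hμ.1
  have := hx.1
  refine ⟨by unfold posterior; positivity, ?_⟩
  rw [posterior, div_le_one hd]
  nlinarith [mul_nonneg (sub_nonneg.2 hμ.2.le) (sub_nonneg.2 hx.2)]

lemma posterior_mono {μ x y : ℝ} (hμ : μ ∈ Ioo (0:ℝ) 1) (hx : x ∈ Icc (0:ℝ) 1)
    (hy : y ∈ Icc (0:ℝ) 1) (hxy : x ≤ y) : posterior μ x ≤ posterior μ y := by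
  rw [posterior, posterior, div_le_div_iff₀ (posterior_denom_pos hμ hx) (posterior_denom_pos hμ hy)]
  nlinarith [mul_nonneg (mul_pos hμ.1 (sub_pos.2 hμ.2)).le (sub_nonneg.2 hxy)]

lemma continuousAt_posterior {μ x : ℝ} (hμ : μ ∈ Ioo (0:ℝ) 1) (hx : x ∈ Icc (0:ℝ) 1) :
    ContinuousAt (posterior μ) x :=
  (continuousAt_const.mul continuousAt_id).div (by fun_prop) (posterior_denom_pos hμ hx).ne'

lemma exists_lt_posterior_of_lt {μ y t : ℝ} (hμ : μ ∈ Ioo (0:ℝ) 1) (hy : y ∈ Icc (0:ℝ) 1)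
    (hy0 : 0 < y) (ht : t < posterior μ y) : ∃ x ∈ Ico (0:ℝ) y, t < posterior μ x :=
  (((continuousAt_posterior hμ hy).eventually (lt_mem_nhds ht)).filter_mono nhdsWithin_le_nhds
    |>.and (Ioo_mem_nhdsLT hy0)).exists.imp fun _ hx => ⟨Ioo_subset_Ico_self hx.2, hx.1⟩

lemma exists_posterior_lt_of_lt {μ y t : ℝ} (hμ : μ ∈ Ioo (0:ℝ) 1) (hy : y ∈ Icc (0:ℝ) 1)
    (hy1 : y < 1) (ht : posterior μ y < t) : ∃ x ∈ Ioc y 1, posterior μ x < t :=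
  (((continuousAt_posterior hμ hy).eventually (gt_mem_nhds ht)).filter_mono nhdsWithin_le_nhds
    |>.and (Ioo_mem_nhdsGT hy1)).exists.imp fun _ hx => ⟨Ioo_subset_Ioc_self hx.2, hx.1⟩

namespace SignalStructure

variable {S : Type} [MeasurableSpace S] (𝒮 : SignalStructure S)

lemma p_mem (s : S) : 𝒮.p s ∈ Icc (0:ℝ) 1 :=
  ⟨by unfold p; positivity,
    div_le_one_of_le₀ (le_add_of_nonneg_right ENNReal.toReal_nonneg) (by positivity)⟩

lemma measurable_p : Measurable 𝒮.p :=
  ((Measure.measurable_rnDeriv _ _).ennreal_toReal).div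
    ((Measure.measurable_rnDeriv _ _).ennreal_toReal.add
      (Measure.measurable_rnDeriv _ _).ennreal_toReal)

lemma measurable_posterior_p (μ : ℝ) : Measurable fun s => posterior μ (𝒮.p s) :=
  (measurable_const.mul 𝒮.measurable_p).div ((measurable_const.mul 𝒮.measurable_p).add
    (measurable_const.mul (measurable_const.sub 𝒮.measurable_p)))

lemma G0_eq_zero {x : ℝ} (hx : x ≤ 0) : 𝒮.G0 x = 0 := by
  have : {s | 𝒮.p s < x} = ∅ := eq_empty_of_forall_notMem fun s (hs : 𝒮.p s < x) =>
    lt_irrefl _ (hs.trans_le (hx.trans (𝒮.p_mem s).1))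
  simp [G0, this]

lemma G0_eq_one {x : ℝ} (hx : 1 < x) : 𝒮.G0 x = 1 := by
  have := 𝒮.prob0
  have : {s | 𝒮.p s < x} = univ := eq_univ_of_forall fun s => (𝒮.p_mem s).2.trans_lt hx
  simp [G0, this]

lemma bddBelow_G0_pos : BddBelow {x | 0 < 𝒮.G0 x} :=
  ⟨0, fun _ (hx : 0 < 𝒮.G0 _) => not_lt.1 fun h => hx.ne' (𝒮.G0_eq_zero h.le)⟩

lemma bddAbove_G0_lt_one : BddAbove {x | 𝒮.G0 x < 1} :=
  ⟨1, fun _ (hx : 𝒮.G0 _ < 1) => not_lt.1 fun h => hx.ne (𝒮.G0_eq_one h)⟩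

lemma alphaLo_mem : 𝒮.alphaLo ∈ Icc (0:ℝ) 1 := by
  have hmem : ∀ x, 1 < x → x ∈ {x | 0 < 𝒮.G0 x} := fun x hx => by
    simp [𝒮.G0_eq_one hx]
  refine ⟨le_csInf ⟨2, hmem 2 one_lt_two⟩ fun x (hx : 0 < 𝒮.G0 x) => ?_,
    le_of_forall_gt fun x hx => csInf_lt_of_lt 𝒮.bddBelow_G0_pos
      (hmem _ (by linarith : 1 < (1 + x) / 2)) (by linarith)⟩
  exact not_lt.1 fun h => hx.ne' (𝒮.G0_eq_zero h.le)

lemma alphaHi_mem : 𝒮.alphaHi ∈ Icc (0:ℝ) 1 := by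
  have h0 : (0:ℝ) ∈ {x | 𝒮.G0 x < 1} := by simp [𝒮.G0_eq_zero le_rfl]
  exact ⟨le_csSup 𝒮.bddAbove_G0_lt_one h0, csSup_le ⟨0, h0⟩ fun x (hx : 𝒮.G0 x < 1) =>
    not_lt.1 fun h => hx.ne (𝒮.G0_eq_one h)⟩

lemma F0_lt_p_ne_zero {x : ℝ} (hx : x < 𝒮.alphaHi) : 𝒮.F0 {s | x < 𝒮.p s} ≠ 0 := by
  have := 𝒮.prob0
  obtain ⟨y, hy, hxy⟩ := exists_lt_of_lt_csSup ⟨0, by simp [𝒮.G0_eq_zero le_rfl]⟩ hx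
  have hy' : 𝒮.F0 {s | 𝒮.p s < y} ≠ 1 := fun h => by simp [G0, h] at hy
  refine fun h0 => hy' (prob_compl_eq_zero_iff (measurableSet_lt 𝒮.measurable_p measurable_const)
    |>.1 (measure_mono_null (fun s hs => ?_) h0))
  exact hxy.trans_le (not_lt.1 hs)

lemma F0_p_lt_ne_zero {x : ℝ} (hx : 𝒮.alphaLo < x) : 𝒮.F0 {s | 𝒮.p s < x} ≠ 0 := by
  obtain ⟨y, hy, hxy⟩ := exists_lt_of_csInf_lt ⟨2, by simp [𝒮.G0_eq_one one_lt_two]⟩ hx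
  refine fun h0 => (show 0 < 𝒮.G0 y from hy).ne' ?_
  have : 𝒮.F0 {s | 𝒮.p s < y} = 0 := measure_mono_null (fun s (hs : 𝒮.p s < y) => hs.trans hxy) h0
  simp [G0, this]

lemma ae_alphaLo_le_p : ∀ᵐ s ∂𝒮.F0, 𝒮.alphaLo ≤ 𝒮.p s := by
  have := 𝒮.prob0
  refine ae_of_ae_map 𝒮.measurable_p.aemeasurable (ae_ge_iff_measure_Iio_eq_zero.2 ?_)
  by_contra h
  obtain ⟨L, hL, hL0⟩ := exists_lt_measure_Iic_ne_zero h
  rw [Measure.map_apply 𝒮.measurable_p measurableSet_Iic] at hL0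
  have hlt : (L + 𝒮.alphaLo) / 2 < 𝒮.alphaLo := by linarith
  refine absurd (csInf_le 𝒮.bddBelow_G0_pos ?_ : 𝒮.alphaLo ≤ (L + 𝒮.alphaLo) / 2) hlt.not_ge
  exact ENNReal.toReal_pos (fun h0 => hL0 (measure_mono_null
    (fun s (hs : 𝒮.p s ≤ L) => show 𝒮.p s < _ by linarith) h0)) (measure_ne_top _ _)

lemma ae_p_le_alphaHi : ∀ᵐ s ∂𝒮.F0, 𝒮.p s ≤ 𝒮.alphaHi := by
  have := 𝒮.prob0
  refine ae_of_ae_map 𝒮.measurable_p.aemeasurable (ae_le_iff_measure_Ioi_eq_zero.2 ?_)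
  by_contra h
  obtain ⟨L, hL, hL0⟩ := exists_gt_measure_Ici_ne_zero h
  rw [Measure.map_apply 𝒮.measurable_p measurableSet_Ici] at hL0
  have hne : 𝒮.F0 {s | 𝒮.p s < L} ≠ 1 := fun h1 => hL0 <| measure_mono_null
    (fun s (hs : L ≤ 𝒮.p s) => not_lt.2 hs)
    ((prob_compl_eq_zero_iff (measurableSet_lt 𝒮.measurable_p measurable_const)).2 h1)
  refine absurd (le_csSup 𝒮.bddAbove_G0_lt_one ?_ : L ≤ 𝒮.alphaHi) (not_le.2 hL)
  simpa [G0] using ENNReal.toReal_strict_mono ENNReal.one_ne_top (prob_le_one.lt_of_ne hne)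

variable {μ : ℝ}

lemma isProbabilityMeasure_Fmix (hμ : μ ∈ Ioo (0:ℝ) 1) : IsProbabilityMeasure (𝒮.Fmix μ) := by
  have := 𝒮.prob0
  have := 𝒮.prob1
  constructor
  simp [Fmix, ← ENNReal.ofReal_add hμ.1.le (sub_nonneg.2 hμ.2.le)]

lemma Fmix_absolutelyContinuous : 𝒮.Fmix μ ≪ 𝒮.F0 :=
  Measure.AbsolutelyContinuous.add_left (.smul_left .rfl _) (.smul_left 𝒮.ac10 _)

lemma absolutelyContinuous_Fmix (hμ : 0 < μ) : 𝒮.F0 ≪ 𝒮.Fmix μ :=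
  ((Measure.absolutelyContinuous_smul (by simpa using hμ)).trans
    (Measure.absolutelyContinuous_of_le (Measure.le_add_right le_rfl)))

lemma ae_posterior_mem (hμ : μ ∈ Ioo (0:ℝ) 1) :
    ∀ᵐ s ∂𝒮.Fmix μ, posterior μ 𝒮.alphaLo ≤ posterior μ (𝒮.p s) ∧
      posterior μ (𝒮.p s) ≤ posterior μ 𝒮.alphaHi :=
  𝒮.Fmix_absolutelyContinuous.ae_le <| (𝒮.ae_alphaLo_le_p.and 𝒮.ae_p_le_alphaHi).mono
    fun s hs => ⟨posterior_mono hμ 𝒮.alphaLo_mem (𝒮.p_mem s) hs.1,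
      posterior_mono hμ (𝒮.p_mem s) 𝒮.alphaHi_mem hs.2⟩

lemma Fmix_lt_posterior_ne_zero (hμ : μ ∈ Ioo (0:ℝ) 1) {t : ℝ}
    (ht : t < posterior μ 𝒮.alphaHi) : 𝒮.Fmix μ {s | t < posterior μ (𝒮.p s)} ≠ 0 := by
  have := 𝒮.isProbabilityMeasure_Fmix hμ
  rcases 𝒮.alphaHi_mem.1.eq_or_lt with h0 | h0
  · have : {s | t < posterior μ (𝒮.p s)} = univ := eq_univ_of_forall fun s =>
      (ht.trans_eq (by simp [← h0, posterior])).trans_le (posterior_mem hμ (𝒮.p_mem s)).1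
    simp [this]
  · obtain ⟨x, hx, hxt⟩ := exists_lt_posterior_of_lt hμ 𝒮.alphaHi_mem h0 ht
    refine fun h => 𝒮.F0_lt_p_ne_zero hx.2 (𝒮.absolutelyContinuous_Fmix hμ.1
      (measure_mono_null (fun s (hs : x < 𝒮.p s) => ?_) h))
    exact hxt.trans_le
      (posterior_mono hμ ⟨hx.1, hx.2.le.trans 𝒮.alphaHi_mem.2⟩ (𝒮.p_mem s) hs.le)

lemma Fmix_posterior_lt_ne_zero (hμ : μ ∈ Ioo (0:ℝ) 1) {t : ℝ}
    (ht : posterior μ 𝒮.alphaLo < t) : 𝒮.Fmix μ {s | posterior μ (𝒮.p s) < t} ≠ 0 := by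
  have := 𝒮.isProbabilityMeasure_Fmix hμ
  rcases 𝒮.alphaLo_mem.2.eq_or_lt with h1 | h1
  · have : {s | posterior μ (𝒮.p s) < t} = univ := eq_univ_of_forall fun s =>
      (posterior_mem hμ (𝒮.p_mem s)).2.trans_lt
        ((by simp [h1, posterior, hμ.1.ne'] : (1:ℝ) = _).trans_lt ht)
    simp [this]
  · obtain ⟨x, hx, hxt⟩ := exists_posterior_lt_of_lt hμ 𝒮.alphaLo_mem h1 ht
    refine fun h => 𝒮.F0_p_lt_ne_zero hx.1 (𝒮.absolutelyContinuous_Fmix hμ.1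
      (measure_mono_null (fun s (hs : 𝒮.p s < x) => ?_) h))
    exact (posterior_mono hμ (𝒮.p_mem s) ⟨𝒮.alphaLo_mem.1.trans hx.1.le, hx.2⟩
      hs.le).trans_lt hxt

theorem IsSPE.isEquilibrium {φ0 φ1 : Measure ℝ} {σ : CStrategy S} (h : 𝒮.IsSPE μ φ0 φ1 σ) :
    Duopoly.IsEquilibrium (𝒮.Fmix μ) (fun s => posterior μ (𝒮.p s)) σ φ0 φ1 where
  own := h.strat0
  rival := h.strat1
  measurable_choice := h.meas
  bestReply := h.consumerBR
  own_opt := h.firm0opt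
  rival_opt ψ hψ := by
    have := h.strat0.1
    have := h.strat1.1
    have := hψ.1
    rw [Duopoly.profit_swapChoice, Duopoly.profit_swapChoice]
    exact h.firm1opt ψ hψ

end SignalStructure

theorem stmt12_general {S : Type} [MeasurableSpace S] (𝒮 : SignalStructure S)
    (μ : ℝ) (hμ : μ ∈ Ioo (0:ℝ) 1)
    (φ0 φ1 : Measure ℝ) (σ : CStrategy S)
    (hSPE : 𝒮.IsSPE μ φ0 φ1 σ) (hND : ¬ 𝒮.IsDeterrence μ φ0 φ1 σ) :
    φ0 (Icc (2 * posterior μ 𝒮.alphaLo - 1) (posterior μ 𝒮.alphaHi)) = 1 ∧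
      φ1 (Icc (1 - 2 * posterior μ 𝒮.alphaHi) (1 - posterior μ 𝒮.alphaLo)) = 1 := by
  have := 𝒮.isProbabilityMeasure_Fmix hμ
  have := hSPE.strat0.1
  have := hSPE.strat1.1
  have E := hSPE.isEquilibrium
  obtain ⟨hsales0, hsales1⟩ : Duopoly.sales (𝒮.Fmix μ) σ φ0 φ1 ≠ 0 ∧
      Duopoly.sales (𝒮.Fmix μ) (Duopoly.swapChoice σ) φ1 φ0 ≠ 0 := by
    rw [Duopoly.sales_swapChoice]
    simp only [SignalStructure.IsDeterrence, hSPE, true_and, not_or] at hND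
    exact hND
  have hq := 𝒮.ae_posterior_mem hμ
  have hr := 𝒮.measurable_posterior_p μ
  have ha1 := (posterior_mem hμ 𝒮.alphaLo_mem).2
  have hb0 := (posterior_mem hμ 𝒮.alphaHi_mem).1
  constructor
  · rw [← measure_univ (μ := φ0), ← ae_mem_iff_measure_eq measurableSet_Icc.nullMeasurableSet]
    filter_upwards [E.ae_two_mul_sub_one_le (hq.mono fun _ h => h.1) ha1,
      E.ae_le hr hb0 (hq.mono fun _ h => h.2) (fun t => 𝒮.Fmix_lt_posterior_ne_zero hμ)
        hsales0 hsales1] with t h1 h2 using ⟨h1, h2⟩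
  · rw [← measure_univ (μ := φ1), ← ae_mem_iff_measure_eq measurableSet_Icc.nullMeasurableSet]
    filter_upwards [E.swap.ae_two_mul_sub_one_le (a := 1 - posterior μ 𝒮.alphaHi)
        (hq.mono fun _ h => by linarith [h.2]) (by linarith),
      E.swap.ae_le (hr.const_sub 1) (b := 1 - posterior μ 𝒮.alphaLo) (by linarith)
        (hq.mono fun _ h => by linarith [h.1])
        (fun t ht => by simpa only [lt_sub_comm] using
          𝒮.Fmix_posterior_lt_ne_zero hμ (lt_sub_comm.1 ht))
        hsales1 (by rwa [Duopoly.swapChoice_swapChoice])] with t h1 h2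
    exact ⟨by linarith, h2⟩

/-- In a non-deterrence SPE of Γ(μ), φ₀([2α⁻_μ−1, α⁺_μ]) = 1 and
φ₁([1−2α⁺_μ, 1−α⁻_μ]) = 1. -/
theorem stmt12 {S : Type} [MeasurableSpace S] (𝒮 : SignalStructure S)
    (g0 g1 : ℝ → ℝ) (hA : 𝒮.Assumption1 g0 g1)
    (μ : ℝ) (hμ : μ ∈ Ioo (0:ℝ) 1)
    (φ0 φ1 : Measure ℝ) (σ : CStrategy S)
    (hSPE : 𝒮.IsSPE μ φ0 φ1 σ) (hND : ¬ 𝒮.IsDeterrence μ φ0 φ1 σ) :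
    φ0 (Icc (2 * posterior μ 𝒮.alphaLo - 1) (posterior μ 𝒮.alphaHi)) = 1 ∧
      φ1 (Icc (1 - 2 * posterior μ 𝒮.alphaHi) (1 - posterior μ 𝒮.alphaLo)) = 1 :=
  stmt12_general 𝒮 μ hμ φ0 φ1 σ hSPE hND
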